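/- Let R be a commutative ring and Γₙ the Laurent polynomial ring in n variables over R. For R-linear endomorphisms of Γₙ define dⱼ(φ) = φ − M_{zⱼ} ∘ φ ∘ M_{zⱼ⁻¹}; define hⱼ by hⱼ(ψ)(z^α) = Σ_{i=0}^{αⱼ−1} z^{i·eⱼ}·ψ(z^{α−i·eⱼ}) if αⱼ ≥ 0 and hⱼ(ψ)(z^α) = −Σ_{i=αⱼ}^{−1} z^{i·eⱼ}·ψ(z^{α−i·eⱼ}) if αⱼ < 0; and define Πⱼ by Πⱼ(φ)(z^α) = zⱼ^{αⱼ}·φ(z^{α−αⱼ·eⱼ}). Then for all R-linear φ, ψ and all j ≠ k in {1,…,n}: (i) dⱼ(hⱼ(ψ)) = ψ; (ii) hⱼ(dⱼ(φ)) = φ − Πⱼ(φ); (iii) hⱼ ∘ dₖ = dₖ ∘ hⱼ and dⱼ ∘ dₖ = dₖ ∘ dⱼ; (iv) Π₁(Π₂(⋯Πₙ(φ))) = M_{φ(1)}, multiplication by φ(1). -/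

import Mathlib

/-- The monomial `z^α` in the Laurent polynomial ring in `n` variables over `R`,
realised as the monoid algebra of `ℤⁿ` over `R`. -/
noncomputable def zmon {R : Type*} [CommRing R] {n : ℕ} (α : Fin n → ℤ) :
    AddMonoidAlgebra R (Fin n → ℤ) :=
  AddMonoidAlgebra.single α 1

/-- The operator `dⱼ(φ) = φ − M_{zⱼ} ∘ φ ∘ M_{zⱼ⁻¹}` on `R`-linear endomorphisms of the
Laurent polynomial ring in `n` variables. -/
noncomputable def torusDiff (R : Type*) [CommRing R] (n : ℕ) (j : Fin n)
    (φ : AddMonoidAlgebra R (Fin n → ℤ) →ₗ[R] AddMonoidAlgebra R (Fin n → ℤ)) :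
    AddMonoidAlgebra R (Fin n → ℤ) →ₗ[R] AddMonoidAlgebra R (Fin n → ℤ) :=
  φ - (LinearMap.mulLeft R (zmon (Pi.single j 1))) ∘ₗ φ ∘ₗ
    (LinearMap.mulLeft R (zmon (-(Pi.single j 1))))


/-!
Everything is checked on the monomials `z^α`, which span `Γₙ`. The two sums defining
`hⱼ(ψ)(z^α)` are one signed sum `S(αⱼ)` over `[0, αⱼ)`, and signed sums are characterised by
`S(0) = 0`, `S(a + 1) = S(a) + c(a)` for all `a ∈ ℤ`. This makes (i) an index shift and (ii) a
telescoping sum whose boundary term at `i = αⱼ` is `Πⱼ(φ)(z^α)`. For (iii), `dₖ` only shifts the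
`k`-th exponent, which the `j`-th operators do not see. For (iv), `Πⱼ` moves the `j`-th exponent
of the argument out of `φ`, so after all `n` of them `φ` is only evaluated at `z^0 = 1`.
-/

section SignedSum

variable {M : Type*} [AddCommGroup M]

/-- `Σ_{i ∈ [0, a)} f i`, read as `-Σ_{i ∈ [a, 0)} f i` when `a < 0`; at most one of the two
sums is nonempty. -/
noncomputable def signedSum (a : ℤ) (f : ℤ → M) : M :=
  ∑ i ∈ Finset.Ico 0 a, f i - ∑ i ∈ Finset.Ico a 0, f i

lemma signedSum_of_nonneg {a : ℤ} (ha : 0 ≤ a) (f : ℤ → M) :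
    signedSum a f = ∑ i ∈ Finset.Ico 0 a, f i := by
  simp [signedSum, Finset.Ico_eq_empty_of_le ha]

lemma signedSum_of_neg {a : ℤ} (ha : a < 0) (f : ℤ → M) :
    signedSum a f = -∑ i ∈ Finset.Icc a (-1), f i := by
  rw [signedSum, Finset.Ico_eq_empty_of_le ha.le, ← Finset.Ico_add_one_right_eq_Icc]
  simp

lemma signedSum_add_one (a : ℤ) (f : ℤ → M) :
    signedSum (a + 1) f = signedSum a f + f a := by
  unfold signedSum
  rcases le_or_gt 0 a with ha | ha
  · rw [Finset.Ico_eq_empty_of_le ha, Finset.Ico_eq_empty_of_le (by omega : (0 : ℤ) ≤ a + 1),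
      ← Finset.sum_Ico_add_eq_sum_Ico_add_one ha]
    simp
  · rw [Finset.Ico_eq_empty_of_le ha.le, Finset.Ico_eq_empty_of_le (by omega : a + 1 ≤ 0),
      ← Finset.insert_Ico_add_one_left_eq_Ico ha, Finset.sum_insert (by simp)]
    abel

lemma eq_signedSum {f : ℤ → M} {F : ℤ → M} (h0 : F 0 = 0)
    (hF : ∀ a, F (a + 1) = F a + f a) (a : ℤ) : F a = signedSum a f := by
  induction a with
  | zero => simp [h0, signedSum]
  | succ i ih => rw [hF, signedSum_add_one, ih]
  | pred i ih =>
    have hF' := hF (-i - 1)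
    have hS := signedSum_add_one (-i - 1) f
    rw [sub_add_cancel] at hF' hS
    exact add_right_cancel (hF'.symm.trans (ih.trans hS))

lemma signedSum_sub (a : ℤ) (f g : ℤ → M) :
    signedSum a (fun i => f i - g i) = signedSum a f - signedSum a g :=
  (eq_signedSum (F := fun a => signedSum a f - signedSum a g) (by simp [signedSum])
    (fun a => by simp only [signedSum_add_one]; abel) a).symm

lemma mul_signedSum {A : Type*} [Ring A] (c : A) (a : ℤ) (f : ℤ → A) :
    c * signedSum a f = signedSum a (fun i => c * f i) :=
  eq_signedSum (F := fun a => c * signedSum a f) (by simp [signedSum])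
    (fun a => by simp only [signedSum_add_one, mul_add]) a

lemma signedSum_sub_one_comp_add_one (a : ℤ) (f : ℤ → M) :
    signedSum (a - 1) (fun i => f (i + 1)) = signedSum a f - f 0 := by
  refine eq_sub_of_add_eq (eq_signedSum (F := fun a => signedSum (a - 1) (fun i => f (i + 1)) + f 0)
    ?_ (fun a => ?_) a)
  · simp [signedSum_of_neg]
  · rw [add_sub_cancel_right, ← sub_add_cancel a 1, signedSum_add_one, sub_add_cancel]
    abel

lemma signedSum_sub_add_one (a : ℤ) (f : ℤ → M) :
    signedSum a (fun i => f i - f (i + 1)) = f 0 - f a :=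
  (eq_signedSum (F := fun a => f 0 - f a) (sub_self _) (fun a => by abel) a).symm

end SignedSum

section Torus

variable {R : Type*} [CommRing R] {n : ℕ}

local notation "Γ" => AddMonoidAlgebra R (Fin n → ℤ)

lemma zmon_zero : (zmon 0 : Γ) = 1 := rfl

lemma zmon_mul_zmon (α β : Fin n → ℤ) : (zmon α : Γ) * zmon β = zmon (α + β) := by
  simp [zmon, AddMonoidAlgebra.single_mul_single]

lemma linearMap_ext_zmon {f g : Γ →ₗ[R] Γ} (h : ∀ α, f (zmon α) = g (zmon α)) : f = g :=
  AddMonoidAlgebra.lhom_ext' fun α => LinearMap.ext_ring (h α)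

lemma torusDiff_apply_zmon (j : Fin n) (φ : Γ →ₗ[R] Γ) (α : Fin n → ℤ) :
    torusDiff R n j φ (zmon α) =
      φ (zmon α) - zmon (Pi.single j 1) * φ (zmon (α - Pi.single j 1)) := by
  simp [torusDiff, zmon_mul_zmon, neg_add_eq_sub]

lemma torusDiff_comm (j k : Fin n) (φ : Γ →ₗ[R] Γ) :
    torusDiff R n j (torusDiff R n k φ) = torusDiff R n k (torusDiff R n j φ) := by
  refine linearMap_ext_zmon fun α => ?_
  simp only [torusDiff_apply_zmon, mul_sub]
  rw [mul_left_comm (zmon (Pi.single j 1)), sub_right_comm α (Pi.single j 1)]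
  abel

/-- `h` is the paper's `hⱼ`, given on monomials. -/
def IsTorusHomotopy (j : Fin n) (h : (Γ →ₗ[R] Γ) → (Γ →ₗ[R] Γ)) : Prop :=
  ∀ ψ α, h ψ (zmon α) =
    signedSum (α j) fun i => zmon (Pi.single j i) * ψ (zmon (α - Pi.single j i))

/-- `P` is the paper's `Πⱼ`, given on monomials. -/
def IsTorusProjection (j : Fin n) (P : (Γ →ₗ[R] Γ) → (Γ →ₗ[R] Γ)) : Prop :=
  ∀ φ α, P φ (zmon α) = zmon (Pi.single j (α j)) * φ (zmon (α - Pi.single j (α j)))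

lemma IsTorusHomotopy.torusDiff_apply {j : Fin n} {h : (Γ →ₗ[R] Γ) → (Γ →ₗ[R] Γ)}
    (hh : IsTorusHomotopy j h) (ψ : Γ →ₗ[R] Γ) :
    torusDiff R n j (h ψ) = ψ := by
  refine linearMap_ext_zmon fun α => ?_
  let c (i : ℤ) := zmon (Pi.single j i) * ψ (zmon (α - Pi.single j i))
  have hshift (i : ℤ) : zmon (Pi.single j 1) *
      (zmon (Pi.single j i) * ψ (zmon (α - Pi.single j 1 - Pi.single j i))) = c (i + 1) := by
    rw [← mul_assoc, zmon_mul_zmon, ← Pi.single_add, sub_sub, ← Pi.single_add, add_comm 1 i]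
  rw [torusDiff_apply_zmon, hh, hh, mul_signedSum]
  simp only [hshift, Pi.sub_apply, Pi.single_eq_same]
  rw [signedSum_sub_one_comp_add_one (α j) c, sub_sub_cancel]
  simp [c, zmon_zero]

lemma IsTorusHomotopy.apply_torusDiff {j : Fin n} {h : (Γ →ₗ[R] Γ) → (Γ →ₗ[R] Γ)}
    (hh : IsTorusHomotopy j h) {P : (Γ →ₗ[R] Γ) → (Γ →ₗ[R] Γ)}
    (hP : IsTorusProjection j P) (φ : Γ →ₗ[R] Γ) :
    h (torusDiff R n j φ) = φ - P φ := by
  refine linearMap_ext_zmon fun α => ?_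
  let c (i : ℤ) := zmon (Pi.single j i) * φ (zmon (α - Pi.single j i))
  have htelescope (i : ℤ) :
      zmon (Pi.single j i) * torusDiff R n j φ (zmon (α - Pi.single j i)) = c i - c (i + 1) := by
    rw [torusDiff_apply_zmon, mul_sub, ← mul_assoc, zmon_mul_zmon, ← Pi.single_add, sub_sub,
      ← Pi.single_add]
  rw [LinearMap.sub_apply, hh, hP]
  simp only [htelescope]
  rw [signedSum_sub_add_one (α j) c]
  simp [c, zmon_zero]

lemma IsTorusHomotopy.apply_torusDiff_comm {j : Fin n} {h : (Γ →ₗ[R] Γ) → (Γ →ₗ[R] Γ)}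
    (hh : IsTorusHomotopy j h) {k : Fin n} (hjk : j ≠ k)
    (φ : Γ →ₗ[R] Γ) : h (torusDiff R n k φ) = torusDiff R n k (h φ) := by
  refine linearMap_ext_zmon fun α => ?_
  have hαj : (α - Pi.single k 1 : Fin n → ℤ) j = α j := by simp [Pi.single_eq_of_ne hjk]
  rw [hh, torusDiff_apply_zmon, hh, hh, hαj, mul_signedSum, ← signedSum_sub]
  congr 1
  funext i
  rw [torusDiff_apply_zmon, mul_sub, mul_left_comm, sub_right_comm α]

lemma foldr_comp_apply_zmon {P : Fin n → (Γ →ₗ[R] Γ) → (Γ →ₗ[R] Γ)}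
    (hP : ∀ j, IsTorusProjection j (P j)) {l : List (Fin n)}
    (hl : l.Nodup) (φ : Γ →ₗ[R] Γ) (α : Fin n → ℤ) :
    (l.map P).foldr (· ∘ ·) id φ (zmon α) =
      zmon (l.map fun k => Pi.single k (α k)).sum *
        φ (zmon (α - (l.map fun k => Pi.single k (α k)).sum)) := by
  induction l generalizing α with
  | nil => simp [zmon_zero]
  | cons j t ih =>
    obtain ⟨hj, ht⟩ := List.nodup_cons.1 hl
    have hrest : (t.map fun k => Pi.single k ((α - Pi.single j (α j) : Fin n → ℤ) k)).sum =
        (t.map fun k => Pi.single k (α k)).sum := by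
      refine congrArg _ (List.map_congr_left fun k hk => ?_)
      rw [Pi.sub_apply, Pi.single_eq_of_ne (ne_of_mem_of_not_mem hk hj), sub_zero]
    simp only [List.map_cons, List.foldr_cons, Function.comp_apply, List.sum_cons]
    rw [hP, ih ht, hrest, ← mul_assoc, zmon_mul_zmon, sub_sub]

lemma foldr_ofFn_comp_eq_mulLeft {P : Fin n → (Γ →ₗ[R] Γ) → (Γ →ₗ[R] Γ)}
    (hP : ∀ j, IsTorusProjection j (P j)) (φ : Γ →ₗ[R] Γ) :
    (List.ofFn P).foldr (· ∘ ·) id φ = LinearMap.mulLeft R (φ 1) := by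
  refine linearMap_ext_zmon fun α => ?_
  rw [List.ofFn_eq_map, foldr_comp_apply_zmon hP (List.nodup_finRange n), ← List.ofFn_eq_map,
    List.sum_ofFn, Finset.univ_sum_single, sub_self, zmon_zero, LinearMap.mulLeft_apply,
    mul_comm]

end Torus

/-- Componentwise identities for the Koszul-type homotopy on the `n`-torus: with
`dⱼ(φ) = φ − M_{zⱼ} ∘ φ ∘ M_{zⱼ⁻¹}`, `hⱼ` determined on monomials by
`hⱼ(ψ)(z^α) = Σ_{i=0}^{αⱼ−1} z^{i·eⱼ}·ψ(z^{α−i·eⱼ})` for `αⱼ ≥ 0` and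
`hⱼ(ψ)(z^α) = −Σ_{i=αⱼ}^{−1} z^{i·eⱼ}·ψ(z^{α−i·eⱼ})` for `αⱼ < 0`, and `Πⱼ` determined by
`Πⱼ(φ)(z^α) = zⱼ^{αⱼ}·φ(z^{α−αⱼ·eⱼ})`, one has for all `φ`, `ψ` and `j ≠ k`:
(i) `dⱼ(hⱼ(ψ)) = ψ`; (ii) `hⱼ(dⱼ(φ)) = φ − Πⱼ(φ)`; (iii) `hⱼ ∘ dₖ = dₖ ∘ hⱼ` and
`dⱼ ∘ dₖ = dₖ ∘ dⱼ`; (iv) `Π₁(Π₂(⋯Πₙ(φ))) = M_{φ(1)}`. -/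
theorem torus_koszul_homotopy_identities (R : Type*) [CommRing R] (n : ℕ)
    (hop Pio : Fin n →
      (AddMonoidAlgebra R (Fin n → ℤ) →ₗ[R] AddMonoidAlgebra R (Fin n → ℤ)) →
      (AddMonoidAlgebra R (Fin n → ℤ) →ₗ[R] AddMonoidAlgebra R (Fin n → ℤ)))
    (h_nonneg : ∀ (j : Fin n) ψ (α : Fin n → ℤ), 0 ≤ α j →
      hop j ψ (zmon α) =
        ∑ i ∈ Finset.Ico (0 : ℤ) (α j), zmon (Pi.single j i) * ψ (zmon (α - Pi.single j i)))
    (h_neg : ∀ (j : Fin n) ψ (α : Fin n → ℤ), α j < 0 →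
      hop j ψ (zmon α) =
        -∑ i ∈ Finset.Icc (α j) (-1 : ℤ), zmon (Pi.single j i) * ψ (zmon (α - Pi.single j i)))
    (h_Pi : ∀ (j : Fin n) φ (α : Fin n → ℤ),
      Pio j φ (zmon α) = zmon (Pi.single j (α j)) * φ (zmon (α - Pi.single j (α j)))) :
    (∀ (j : Fin n) ψ, torusDiff R n j (hop j ψ) = ψ) ∧
    (∀ (j : Fin n) φ, hop j (torusDiff R n j φ) = φ - Pio j φ) ∧
    (∀ j k : Fin n, j ≠ k →
      (∀ φ, hop j (torusDiff R n k φ) = torusDiff R n k (hop j φ)) ∧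
      (∀ φ, torusDiff R n j (torusDiff R n k φ) = torusDiff R n k (torusDiff R n j φ))) ∧
    (∀ φ, (List.ofFn fun j : Fin n => Pio j).foldr (· ∘ ·) id φ =
      LinearMap.mulLeft R (φ (1 : AddMonoidAlgebra R (Fin n → ℤ)))) := by
  have hhop (j : Fin n) : IsTorusHomotopy j (hop j) := fun ψ α => by
    rcases le_or_gt 0 (α j) with h | h
    · rw [h_nonneg j ψ α h, signedSum_of_nonneg h]
    · rw [h_neg j ψ α h, signedSum_of_neg h]
  exact ⟨fun j => (hhop j).torusDiff_apply,
    fun j => (hhop j).apply_torusDiff (h_Pi j),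
    fun j k hjk => ⟨(hhop j).apply_torusDiff_comm hjk, torusDiff_comm j k⟩,
    foldr_ofFn_comp_eq_mulLeft h_Pi⟩
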